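/- Let h1, h2 ∈ ℝ^D be bipolar vectors with h1 ≠ −h2 (so that h1 ⊕ h2 ≠ 0). Then the true cosine similarity between h1 and the bundled context satisfies cos(h1, h1 ⊕ h2) = √((1 + cos(h1, h2))/2); in particular cos(h1, h1 ⊕ h2) ≥ 0 and cos(h1, h1 ⊕ h2) is a monotonically increasing function of cos(h1, h2). -/
import Mathlib


open Finset

noncomputable section

/-- A bipolar vector: every coordinate is `+1` or `-1`. -/
def IsBipolar {D : ℕ} (h : Fin D → ℝ) : Prop := ∀ i, h i = 1 ∨ h i = -1

/-- A binary vector: every coordinate is `0` or `1`. -/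
def IsBinary {D : ℕ} (b : Fin D → ℝ) : Prop := ∀ i, b i = 0 ∨ b i = 1

/-- Euclidean inner product on `ℝ^D`. -/
def ip {D : ℕ} (u v : Fin D → ℝ) : ℝ := ∑ i, u i * v i

/-- Euclidean norm on `ℝ^D`. -/
def euclNorm {D : ℕ} (u : Fin D → ℝ) : ℝ := Real.sqrt (∑ i, u i ^ 2)

/-- Cosine similarity. -/
def cosSim {D : ℕ} (u v : Fin D → ℝ) : ℝ := ip u v / (euclNorm u * euclNorm v)

/-- The map `B` from bipolar to binary vectors, `B(x) = (x+1)/2` componentwise. -/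
def bmap {D : ℕ} (h : Fin D → ℝ) : Fin D → ℝ := fun i => (h i + 1) / 2

/-- Componentwise binary AND of two binary vectors. -/
def bAnd {D : ℕ} (b1 b2 : Fin D → ℝ) : Fin D → ℝ :=
  fun i => if b1 i = 1 ∧ b2 i = 1 then 1 else 0

/-- L0 norm: the number of nonzero entries. -/
def l0 {D : ℕ} (b : Fin D → ℝ) : ℕ := (Finset.univ.filter fun i => b i ≠ 0).card

/-- Bundling `h1 ⊕ h2 = sign (h1 + h2)` componentwise. -/
def bundle {D : ℕ} (h1 h2 : Fin D → ℝ) : Fin D → ℝ := fun i => Real.sign (h1 i + h2 i)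

/-- Hamming distance: number of coordinates where the vectors differ. -/
def hamming {D : ℕ} (h1 h2 : Fin D → ℝ) : ℕ := (Finset.univ.filter fun i => h1 i ≠ h2 i).card

lemma key14 {D : ℕ} (h1 h2 : Fin D → ℝ) (hb1 : IsBipolar h1) (hb2 : IsBipolar h2)
    (hne : h1 ≠ -h2) :
    cosSim h1 (bundle h1 h2) = Real.sqrt ((1 + cosSim h1 h2) / 2) := by
  classical
  set A : Finset (Fin D) := Finset.univ.filter (fun i => h1 i = h2 i) with hA
  set a : ℕ := A.card with ha
  have hex : ∃ i, h1 i = h2 i := by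
    by_contra hc
    push_neg at hc
    apply hne
    funext i
    rcases hb1 i with p1 | p1 <;> rcases hb2 i with p2 | p2 <;>
      simp [p1, p2] at hc ⊢ <;> first | rfl | exact absurd (p1.trans p2.symm) (hc i)
  obtain ⟨i0, hi0⟩ := hex
  have hD : 0 < D := Fin.pos i0
  have hapos : 0 < a := by
    rw [ha]
    exact Finset.card_pos.mpr ⟨i0, by simp [hA, hi0]⟩
  have hbun : ∀ i, bundle h1 h2 i = if h1 i = h2 i then h1 i else 0 := by
    intro i
    rcases hb1 i with p1 | p1 <;> rcases hb2 i with p2 | p2 <;>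
      simp only [bundle, p1, p2] <;> norm_num [Real.sign]
  have s1 : ∑ i, h1 i ^ 2 = (D : ℝ) := by
    have : ∀ i ∈ Finset.univ, h1 i ^ 2 = (1 : ℝ) := by
      intro i _; rcases hb1 i with p | p <;> simp [p]
    rw [Finset.sum_congr rfl this]
    simp
  have s1' : ∑ i, h2 i ^ 2 = (D : ℝ) := by
    have : ∀ i ∈ Finset.univ, h2 i ^ 2 = (1 : ℝ) := by
      intro i _; rcases hb2 i with p | p <;> simp [p]
    rw [Finset.sum_congr rfl this]
    simp
  have s2 : ∑ i, (bundle h1 h2 i) ^ 2 = (a : ℝ) := by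
    have : ∀ i ∈ Finset.univ, (bundle h1 h2 i) ^ 2 = if h1 i = h2 i then (1:ℝ) else 0 := by
      intro i _
      rw [hbun i]
      rcases hb1 i with p | p <;> split <;> simp [p]
    rw [Finset.sum_congr rfl this, Finset.sum_boole]
    all_goals simp [ha, hA]
  have s3 : ip h1 (bundle h1 h2) = (a : ℝ) := by
    unfold ip
    have : ∀ i ∈ Finset.univ, h1 i * bundle h1 h2 i = if h1 i = h2 i then (1:ℝ) else 0 := by
      intro i _
      rw [hbun i]
      rcases hb1 i with p | p <;> split <;> simp [p]
    rw [Finset.sum_congr rfl this, Finset.sum_boole]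
    all_goals simp [ha, hA]
  have s4 : ip h1 h2 = 2 * (a : ℝ) - D := by
    unfold ip
    have : ∀ i ∈ Finset.univ, h1 i * h2 i = 2 * (if h1 i = h2 i then (1:ℝ) else 0) - 1 := by
      intro i _
      rcases hb1 i with p1 | p1 <;> rcases hb2 i with p2 | p2 <;> norm_num [p1, p2]
    rw [Finset.sum_congr rfl this, Finset.sum_sub_distrib, ← Finset.mul_sum, Finset.sum_boole]
    simp [ha, hA]
  have hn1 : euclNorm h1 = Real.sqrt D := by rw [euclNorm, s1]
  have hn1' : euclNorm h2 = Real.sqrt D := by rw [euclNorm, s1']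
  have hn2 : euclNorm (bundle h1 h2) = Real.sqrt a := by rw [euclNorm, s2]
  have hDne : (0:ℝ) < (D:ℝ) := by exact_mod_cast hD
  have hane : (0:ℝ) < (a:ℝ) := by exact_mod_cast hapos
  have hsD : (0:ℝ) < Real.sqrt D := Real.sqrt_pos.mpr hDne
  have hsa : (0:ℝ) < Real.sqrt a := Real.sqrt_pos.mpr hane
  have lhs : cosSim h1 (bundle h1 h2) = Real.sqrt a / Real.sqrt D := by
    rw [cosSim, s3, hn1, hn2, div_eq_div_iff (by positivity) hsD.ne']
    linear_combination Real.sqrt (D:ℝ) * (Real.sq_sqrt hane.le).symm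
  have rhs : (1 + cosSim h1 h2) / 2 = (a : ℝ) / D := by
    rw [cosSim, s4, hn1, hn1', Real.mul_self_sqrt hDne.le]
    field_simp
    ring
  rw [lhs, rhs, Real.sqrt_div hane.le]

/-- For bipolar `h1 ≠ −h2`: `cos(h1, h1 ⊕ h2) = √((1 + cos(h1,h2))/2)`; in particular
it is nonnegative and a monotonically increasing function of `cos(h1,h2)`. -/
theorem stmt14 {D : ℕ} (h1 h2 : Fin D → ℝ) (hb1 : IsBipolar h1) (hb2 : IsBipolar h2)
    (hne : h1 ≠ -h2) :
    cosSim h1 (bundle h1 h2) = Real.sqrt ((1 + cosSim h1 h2) / 2) ∧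
    0 ≤ cosSim h1 (bundle h1 h2) ∧
    ∀ g1 g2 : Fin D → ℝ, IsBipolar g1 → IsBipolar g2 → g1 ≠ -g2 →
      cosSim h1 h2 ≤ cosSim g1 g2 →
      cosSim h1 (bundle h1 h2) ≤ cosSim g1 (bundle g1 g2) := by
  have hk := key14 h1 h2 hb1 hb2 hne
  refine ⟨hk, by rw [hk]; exact Real.sqrt_nonneg _, ?_⟩
  intro g1 g2 hg1 hg2 hgne hle
  rw [hk, key14 g1 g2 hg1 hg2 hgne]
  exact Real.sqrt_le_sqrt (by linarith)

end
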